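/- Let n be an even positive integer and let M be the linear operator on functions ZMod n → ℂ given by pointwise multiplication by the sign character f_{n/2} (i.e. (M g)(x) = (−1)^{x.val} g(x)). Then M ∘ M = id, M commutes with λ_t for every t ∈ ZMod n, and M maps V_s bijectively onto V_{s + n/2} for every integer s. In particular, for n = 2r the invariant subspaces V_s and V_{r − s} are equivalent subrepresentations of the regular representation of R_n (each 2-dimensional irreducible occurs with multiplicity 2). -/
import Mathlib


/-- The regular representation of the dihedral quandle `R_n = Quandle.dihedral n`
(`ZMod n` with `x ◃ y = 2y - x`) on functions `ZMod n → ℂ`: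
`(λ_t f)(x) = f (2t - x)`. -/
def lam (n : ℕ) (t : ZMod n) (f : ZMod n → ℂ) : ZMod n → ℂ :=
  fun x => f (2 * t - x)

/-- `ω = exp(2πi/n)`. -/
noncomputable def dihedralOmega (n : ℕ) : ℂ :=
  Complex.exp (2 * Real.pi * Complex.I / n)

/-- The character `f_s : ZMod n → ℂ`, `f_s(x) = ω^{s·x.val}`. -/
noncomputable def chi (n : ℕ) (s : ℤ) : ZMod n → ℂ :=
  fun x => dihedralOmega n ^ (s * (x.val : ℤ))

/-- `V_s`: the `ℂ`-linear span of `{f_s, f_{-s}}` in `ZMod n → ℂ`. -/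
noncomputable def Vsub (n : ℕ) (s : ℤ) : Submodule ℂ (ZMod n → ℂ) :=
  Submodule.span ℂ {chi n s, chi n (-s)}

/-- Pointwise multiplication by the sign character `f_{n/2}(x) = (-1)^{x.val}`
(well defined for `n` even). -/
def signMul (n : ℕ) (g : ZMod n → ℂ) : ZMod n → ℂ :=
  fun x => (-1 : ℂ) ^ x.val * g x

/-- `signMul` as a linear map. -/
noncomputable def signMulL (n : ℕ) : (ZMod n → ℂ) →ₗ[ℂ] (ZMod n → ℂ) where
  toFun := signMul n
  map_add' f g := by funext x; simp [signMul]; ring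
  map_smul' c f := by funext x; simp [signMul]; ring

lemma omega_ne_zero (n : ℕ) : dihedralOmega n ≠ 0 := Complex.exp_ne_zero _

lemma omega_pow_n (n : ℕ) (hpos : 0 < n) : dihedralOmega n ^ n = 1 := by
  unfold dihedralOmega
  rw [← Complex.exp_nat_mul]
  have hn : (n : ℂ) ≠ 0 := Nat.cast_ne_zero.mpr hpos.ne'
  have : (n : ℂ) * (2 * Real.pi * Complex.I / n) = 2 * Real.pi * Complex.I := by
    field_simp
  rw [this, Complex.exp_two_pi_mul_I]

lemma omega_pow_r (n r : ℕ) (hn : n = 2 * r) (hpos : 0 < n) :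
    dihedralOmega n ^ r = -1 := by
  have hr : (r : ℂ) ≠ 0 := by
    have : r ≠ 0 := by omega
    exact_mod_cast Nat.cast_ne_zero.mpr this
  unfold dihedralOmega
  rw [← Complex.exp_nat_mul]
  have : (r : ℂ) * (2 * Real.pi * Complex.I / n) = Real.pi * Complex.I := by
    subst hn
    push_cast
    field_simp
  rw [this, Complex.exp_pi_mul_I]

lemma chi_period (n : ℕ) (hpos : 0 < n) (s : ℤ) : chi n (s + n) = chi n s := by
  funext x
  unfold chi
  rw [add_mul, zpow_add₀ (omega_ne_zero n)]
  have h : dihedralOmega n ^ ((n : ℤ) * (x.val : ℤ)) = 1 := by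
    rw [zpow_mul, zpow_natCast, zpow_natCast, omega_pow_n n hpos, one_pow]
  rw [h, mul_one]

lemma signMul_chi (n r : ℕ) (hn : n = 2 * r) (hpos : 0 < n) (s : ℤ) :
    signMul n (chi n s) = chi n (s + r) := by
  funext x
  unfold signMul chi
  rw [← omega_pow_r n r hn hpos, ← pow_mul, ← zpow_natCast (dihedralOmega n) (r * x.val),
    ← zpow_add₀ (omega_ne_zero n)]
  congr 1
  push_cast
  ring

/-- For even `n = 2r > 0`, the operator `M = signMul n` satisfies `M ∘ M = id`,
commutes with every `λ_t`, and maps `V_s` bijectively onto `V_{s + n/2}`;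
moreover `V_{s + n/2} = V_{r - s}`.  In particular the invariant subspaces
`V_s` and `V_{r - s}` are equivalent subrepresentations of the regular
representation of `R_n` (each 2-dimensional irreducible occurs with
multiplicity 2). -/
theorem sign_multiplication_equivalence (n r : ℕ) (hn : n = 2 * r) (hpos : 0 < n) :
    (signMul n ∘ signMul n = id) ∧
    (∀ t : ZMod n, signMul n ∘ lam n t = lam n t ∘ signMul n) ∧
    (∀ s : ℤ, Set.BijOn (signMul n) (Vsub n s) (Vsub n (s + r))) ∧
    (∀ s : ℤ, Vsub n (s + r) = Vsub n ((r : ℤ) - s)) := by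
  haveI : NeZero n := ⟨hpos.ne'⟩
  -- M ∘ M = id
  have hMM : signMul n ∘ signMul n = id := by
    funext g
    funext x
    simp only [Function.comp_apply, signMul, id_eq, ← mul_assoc, ← pow_add]
    rw [Even.neg_one_pow ⟨x.val, rfl⟩, one_mul]
  have hinj : Function.Injective (signMul n) :=
    Function.LeftInverse.injective (g := signMul n) (fun g => congrFun hMM g)
  -- parity fact
  have hpar : ∀ x y : ZMod n, Even (x.val + y.val) → ((-1 : ℂ)) ^ x.val = (-1) ^ y.val := by
    intro x y hE
    have hab : ((-1 : ℂ)) ^ x.val * (-1) ^ y.val = 1 := by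
      rw [← pow_add]; exact Even.neg_one_pow hE
    have hbb : ((-1 : ℂ)) ^ y.val * (-1) ^ y.val = 1 := by
      rw [← pow_add]; exact Even.neg_one_pow ⟨y.val, rfl⟩
    calc ((-1 : ℂ)) ^ x.val = (-1) ^ x.val * ((-1) ^ y.val * (-1) ^ y.val) := by
          rw [hbb, mul_one]
      _ = ((-1) ^ x.val * (-1) ^ y.val) * (-1) ^ y.val := by ring
      _ = (-1) ^ y.val := by rw [hab, one_mul]
    -- commuting with lam
  have hcomm : ∀ t : ZMod n, signMul n ∘ lam n t = lam n t ∘ signMul n := by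
    intro t
    funext g
    funext x
    simp only [Function.comp_apply, signMul, lam]
    have hEven : Even (x.val + (2 * t - x).val) := by
      have h2 : x + (2 * t - x) = t + t := by ring
      have h1 : (x.val + (2 * t - x).val) % n = (t.val + t.val) % n := by
        rw [← ZMod.val_add, ← ZMod.val_add, h2]
      have hmod : (x.val + (2 * t - x).val) % 2 = (t.val + t.val) % 2 := by
        have : Nat.ModEq n (x.val + (2 * t - x).val) (t.val + t.val) := h1
        exact this.of_dvd ⟨r, hn⟩
      rw [Nat.even_iff, hmod, ← two_mul, Nat.mul_mod_right]
    rw [hpar x (2 * t - x) hEven]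
  -- image of Vsub under the linear map
  have himg : ∀ s : ℤ, Submodule.map (signMulL n) (Vsub n s) = Vsub n (s + r) := by
    intro s
    unfold Vsub
    rw [Submodule.map_span, Set.image_pair]
    have h1 : signMulL n (chi n s) = chi n (s + r) := signMul_chi n r hn hpos s
    have h2 : signMulL n (chi n (-s)) = chi n (-(s + r)) := by
      have := signMul_chi n r hn hpos (-s)
      have heq : chi n (-s + r) = chi n (-(s + r)) := by
        have hp := chi_period n hpos (-(s + r))
        have : -(s + (r : ℤ)) + n = -s + r := by rw [hn]; push_cast; ring
        rw [this] at hp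
        exact hp
      rw [show (signMulL n) (chi n (-s)) = signMul n (chi n (-s)) from rfl, this, heq]
    rw [h1, h2]
  have hmaps : ∀ s : ℤ, Set.MapsTo (signMul n) (Vsub n s) (Vsub n (s + r)) := by
    intro s g hg
    have : signMulL n g ∈ Submodule.map (signMulL n) (Vsub n s) := ⟨g, hg, rfl⟩
    rw [himg s] at this
    exact this
  have hVperiod : ∀ s : ℤ, Vsub n (s + n) = Vsub n s := by
    intro s
    unfold Vsub
    have h1 : chi n (s + n) = chi n s := chi_period n hpos s
    have h2 : chi n (-(s + n)) = chi n (-s) := by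
      have hp := chi_period n hpos (-(s + n))
      have : -(s + (n : ℤ)) + n = -s := by ring
      rw [this] at hp
      exact hp.symm
    rw [h1, h2]
  refine ⟨hMM, hcomm, ?_, ?_⟩
  · intro s
    refine ⟨hmaps s, hinj.injOn, ?_⟩
    intro y hy
    have h1 : signMul n y ∈ Vsub n (s + r + r) := hmaps (s + r) hy
    have h2 : Vsub n (s + r + r) = Vsub n s := by
      have : s + (r : ℤ) + r = s + n := by rw [hn]; push_cast; ring
      rw [this, hVperiod]
    rw [h2] at h1
    exact ⟨signMul n y, h1, congrFun hMM y⟩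
  · intro s
    unfold Vsub
    have h1 : chi n ((r : ℤ) - s) = chi n (-(s + r)) := by
      have hp := chi_period n hpos (-(s + r))
      have : -(s + (r : ℤ)) + n = (r : ℤ) - s := by rw [hn]; push_cast; ring
      rw [this] at hp
      exact hp
    have h2 : chi n (-((r : ℤ) - s)) = chi n (s + r) := by
      have hp := chi_period n hpos (-((r : ℤ) - s))
      have : -((r : ℤ) - s) + n = s + r := by rw [hn]; push_cast; ring
      rw [this] at hp
      exact hp.symm
    rw [h1, h2, Set.pair_comm]
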